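/- First-order pathwise derivatives of S_m (part of Lemma 3.1): Fix m ∈ ℕ⁺ and (t̂,a) ∈ Λ̂, and define S_m^{t̂,a}(t,x) := S_m(t,x,t̂,a) for (t,x) ∈ Λ̂^{t̂}. Then S_m^{t̂,a} is d_∞-continuous on Λ̂^{t̂}, its horizontal derivative exists and satisfies ∂_t S_m^{t̂,a}(t,x) = 0 for all (t,x) ∈ Λ̂^{t̂}, and for each i = 1,…,d the vertical derivative exists and satisfies ∂_{x_i} S_m^{t̂,a}(t,x) = -6m·(|x - a_{t-t̂}|_C^{2m} - |x(0)-a(0)|^{2m})²·|x(0)-a(0)|^{2m-2}·(x_i(0)-a_i(0)) / |x - a_{t-t̂}|_C^{4m} if |x - a_{t-t̂}|_C ≠ 0, and ∂_{x_i} S_m^{t̂,a}(t,x) = 0 if |x - a_{t-t̂}|_C = 0 (here x_i(0) := ⟨x(0), e_i⟩, and for m = 1 the factor |x(0)-a(0)|^{2m-2} is interpreted as 1). Moreover ∂_x S_m^{t̂,a} is d_∞-continuous on Λ̂^{t̂}. -/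

import Mathlib

open Filter Topology MeasureTheory Matrix
open scoped RealInnerProductSpace

noncomputable section

namespace PathHJB

/-- The domain `(-∞,0]` of the paths. -/
abbrev PathDom : Type := Set.Iic (0 : ℝ)

abbrev Eucl (d : ℕ) := EuclideanSpace ℝ (Fin d)

/-- Paths on `(-∞,0]` with values in `ℝ^d`. -/
abbrev Pth (d : ℕ) := PathDom → Eucl d

def zeroPt : PathDom := ⟨0, Set.self_mem_Iic⟩

/-- The sup norm `|x|_C`. -/
def normC {d : ℕ} (x : Pth d) : ℝ := ⨆ θ : PathDom, ‖x θ‖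

/-- The shifted path `x_h`. -/
def shift {d : ℕ} (x : Pth d) (h : ℝ) : Pth d := fun θ =>
  if hθ : -h ≤ θ.1 then x zeroPt
  else x ⟨θ.1 + h, Set.mem_Iic.mpr (by push_neg at hθ; linarith)⟩

/-- The vertical perturbation `x + v · 1_{{0}}`. -/
def vpert {d : ℕ} (x : Pth d) (v : Eucl d) : Pth d := fun θ =>
  if θ.1 = 0 then x θ + v else x θ

/-- Càdlàg: right-continuous with left limits. -/
def IsCadlag {d : ℕ} (x : Pth d) : Prop :=
  (∀ θ : PathDom, ContinuousWithinAt x {η : PathDom | θ.1 ≤ η.1} θ) ∧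
  (∀ θ : PathDom, ∃ L : Eucl d, Tendsto x (nhdsWithin θ {η : PathDom | η.1 < θ.1}) (nhds L))

/-- `𝒟₀`: càdlàg paths vanishing at `-∞`. -/
def D0 (d : ℕ) : Set (Pth d) := {x | IsCadlag x ∧ Tendsto x atBot (nhds 0)}

/-- `𝒞₀`: continuous paths vanishing at `-∞`. -/
def C0 (d : ℕ) : Set (Pth d) := {x | Continuous x ∧ Tendsto x atBot (nhds 0)}

/-- The metric `d_∞`. -/
def dInfty {d : ℕ} (p q : ℝ × Pth d) : ℝ :=
  if p.1 ≤ q.1 then |q.1 - p.1| + normC (shift p.2 (q.1 - p.1) - q.2)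
  else |p.1 - q.1| + normC (shift q.2 (p.1 - q.1) - p.2)

/-- `Λ̂^t = [t,∞) × 𝒟₀`. -/
def LamHat (d : ℕ) (t : ℝ) : Set (ℝ × Pth d) := {p | t ≤ p.1 ∧ p.2 ∈ D0 d}

/-- `Λ^t = [t,∞) × 𝒞₀`. -/
def Lam (d : ℕ) (t : ℝ) : Set (ℝ × Pth d) := {p | t ≤ p.1 ∧ p.2 ∈ C0 d}

def stdBasis (d : ℕ) (i : Fin d) : Eucl d := EuclideanSpace.single i 1

/-- Horizontal (Dupire) derivative. -/
def HasHorizDerivAt {d : ℕ} (f : ℝ × Pth d → ℝ) (p : ℝ × Pth d) (v : ℝ) : Prop :=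
  Tendsto (fun h : ℝ => (f (p.1 + h, shift p.2 h) - f p) / h) (𝓝[>] (0:ℝ)) (𝓝 v)

/-- Vertical (Dupire) derivative in direction `e_i`. -/
def HasVertDerivAt {d : ℕ} (f : ℝ × Pth d → ℝ) (p : ℝ × Pth d) (i : Fin d) (v : ℝ) : Prop :=
  Tendsto (fun h : ℝ => (f (p.1, vpert p.2 (h • stdBasis d i)) - f p) / h) (𝓝[≠] (0:ℝ)) (𝓝 v)

/-- Continuity on a set w.r.t. `d_∞`. -/
def DContinuousOn {d : ℕ} {E : Type*} [NormedAddCommGroup E]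
    (f : ℝ × Pth d → E) (S : Set (ℝ × Pth d)) : Prop :=
  ∀ p ∈ S, ∀ ε > (0:ℝ), ∃ δ > (0:ℝ), ∀ q ∈ S, dInfty p q < δ → ‖f q - f p‖ < ε

/-- Uniform continuity on a set w.r.t. `d_∞`. -/
def DUnifContOn {d : ℕ} {E : Type*} [NormedAddCommGroup E]
    (f : ℝ × Pth d → E) (S : Set (ℝ × Pth d)) : Prop :=
  ∀ ε > (0:ℝ), ∃ δ > (0:ℝ), ∀ p ∈ S, ∀ q ∈ S, dInfty p q < δ → ‖f q - f p‖ < ε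

def BoundedOn {d : ℕ} {E : Type*} [NormedAddCommGroup E]
    (f : ℝ × Pth d → E) (S : Set (ℝ × Pth d)) : Prop :=
  ∃ M : ℝ, ∀ p ∈ S, ‖f p‖ ≤ M

def PolyGrowthOn {d : ℕ} {E : Type*} [NormedAddCommGroup E]
    (f : ℝ × Pth d → E) (S : Set (ℝ × Pth d)) : Prop :=
  ∃ C : ℝ, ∃ k : ℕ, ∀ p ∈ S, ‖f p‖ ≤ C * (1 + |p.1| + normC p.2) ^ k

/-- `f ∈ C_p^{1,2}(Λ̂^t)`, with prescribed pathwise derivatives. -/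
structure IsCp12Hat (d : ℕ) (t : ℝ) (f : ℝ × Pth d → ℝ) (ft : ℝ × Pth d → ℝ)
    (fx : ℝ × Pth d → Eucl d) (fxx : ℝ × Pth d → Matrix (Fin d) (Fin d) ℝ) : Prop where
  horiz : ∀ p ∈ LamHat d t, HasHorizDerivAt f p (ft p)
  vert : ∀ p ∈ LamHat d t, ∀ i, HasVertDerivAt f p i (fx p i)
  vert2 : ∀ p ∈ LamHat d t, ∀ i j, HasVertDerivAt (fun q => fx q j) p i (fxx p i j)
  cont : DContinuousOn f (LamHat d t)
  cont_t : DContinuousOn ft (LamHat d t)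
  cont_x : DContinuousOn fx (LamHat d t)
  cont_xx : ∀ i j, DContinuousOn (fun p => fxx p i j) (LamHat d t)
  growth : PolyGrowthOn f (LamHat d t)
  growth_t : PolyGrowthOn ft (LamHat d t)
  growth_x : PolyGrowthOn fx (LamHat d t)
  growth_xx : ∀ i j, PolyGrowthOn (fun p => fxx p i j) (LamHat d t)

/-- Hilbert–Schmidt norm of a matrix. -/
def hsNorm {m n : ℕ} (A : Matrix (Fin m) (Fin n) ℝ) : ℝ :=
  Real.sqrt (∑ i, ∑ j, (A i j) ^ 2)

/-- The Hamiltonian `H`. -/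
def Ham {d n : ℕ} {U : Type*} (b : Pth d → U → Eucl d)
    (σ' : Pth d → U → Matrix (Fin d) (Fin n) ℝ) (q : Pth d → U → ℝ)
    (x : Pth d) (p : Eucl d) (l : Matrix (Fin d) (Fin d) ℝ) : ℝ :=
  ⨅ u : U, ((inner ℝ p (b x u) : ℝ) + (1/2) * (l * (σ' x u * (σ' x u)ᵀ)).trace + q x u)

/-- Hypothesis 4.2. -/
structure Hyp42 {d n : ℕ} {U : Type*} [PseudoMetricSpace U] (L : ℝ)
    (b : Pth d → U → Eucl d) (σ' : Pth d → U → Matrix (Fin d) (Fin n) ℝ)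
    (q : Pth d → U → ℝ) : Prop where
  pos : 0 < L
  continuous : ∀ x ∈ C0 d, ∀ u : U, ∀ ε > (0:ℝ), ∃ δ > (0:ℝ), ∀ y ∈ C0 d, ∀ u' : U,
    normC (x - y) < δ → dist u u' < δ →
    ‖b x u - b y u'‖ < ε ∧ hsNorm (σ' x u - σ' y u') < ε ∧ |q x u - q y u'| < ε
  bound_b : ∀ x ∈ C0 d, ∀ u : U, ‖b x u‖ ^ 2 ≤ L ^ 2 * (1 + normC x ^ 2)
  bound_σ : ∀ x ∈ C0 d, ∀ u : U, hsNorm (σ' x u) ^ 2 ≤ L ^ 2 * (1 + normC x ^ 2)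
  bound_q : ∀ x ∈ C0 d, ∀ u : U, (q x u) ^ 2 ≤ L ^ 2 * (1 + normC x ^ 2)
  lip_b : ∀ x ∈ C0 d, ∀ y ∈ C0 d, ∀ u : U, ‖b x u - b y u‖ ≤ L * normC (x - y)
  lip_σ : ∀ x ∈ C0 d, ∀ y ∈ C0 d, ∀ u : U, hsNorm (σ' x u - σ' y u) ≤ L * normC (x - y)
  lip_q : ∀ x ∈ C0 d, ∀ y ∈ C0 d, ∀ u : U, |q x u - q y u| ≤ L * normC (x - y)

/-- Viscosity subsolution of `-λ w + ∂_t w + H(x, ∂_x w, ∂_{xx} w) = 0`. -/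
def IsViscSubsol {d n : ℕ} {U : Type*} (lam : ℝ) (b : Pth d → U → Eucl d)
    (σ' : Pth d → U → Matrix (Fin d) (Fin n) ℝ) (q : Pth d → U → ℝ)
    (w : Pth d → ℝ) : Prop :=
  ∀ s : ℝ, 0 ≤ s → ∀ x ∈ C0 d,
    ∀ (φ φt : ℝ × Pth d → ℝ) (φx : ℝ × Pth d → Eucl d)
      (φxx : ℝ × Pth d → Matrix (Fin d) (Fin d) ℝ),
      IsCp12Hat d s φ φt φx φxx →
      w x - φ (s, x) = 0 →
      (∀ p ∈ Lam d s, w p.2 - φ p ≤ 0) →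
      0 ≤ -lam * w x + φt (s, x) + Ham b σ' q x (φx (s, x)) (φxx (s, x))

/-- Viscosity supersolution. -/
def IsViscSupersol {d n : ℕ} {U : Type*} (lam : ℝ) (b : Pth d → U → Eucl d)
    (σ' : Pth d → U → Matrix (Fin d) (Fin n) ℝ) (q : Pth d → U → ℝ)
    (w : Pth d → ℝ) : Prop :=
  ∀ s : ℝ, 0 ≤ s → ∀ x ∈ C0 d,
    ∀ (φ φt : ℝ × Pth d → ℝ) (φx : ℝ × Pth d → Eucl d)
      (φxx : ℝ × Pth d → Matrix (Fin d) (Fin d) ℝ),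
      IsCp12Hat d s φ φt φx φxx →
      w x + φ (s, x) = 0 →
      (∀ p ∈ Lam d s, 0 ≤ w p.2 + φ p) →
      -lam * w x - φt (s, x) + Ham b σ' q x (-φx (s, x)) (-φxx (s, x)) ≤ 0


/-- The two-argument functional `S_m(t,x,s,y)`. -/
def SmP {d : ℕ} (m : ℕ) (p q : ℝ × Pth d) : ℝ :=
  if normC (shift p.2 (max (q.1 - p.1) 0) - shift q.2 (max (p.1 - q.1) 0)) = 0 then 0
  else (normC (shift p.2 (max (q.1 - p.1) 0) - shift q.2 (max (p.1 - q.1) 0)) ^ (2*m)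
        - ‖p.2 zeroPt - q.2 zeroPt‖ ^ (2*m)) ^ 3
       / normC (shift p.2 (max (q.1 - p.1) 0) - shift q.2 (max (p.1 - q.1) 0)) ^ (4*m)

/-- `Υ^{m,M}(t,x,s,y)`. -/
def UpsP {d : ℕ} (m : ℕ) (M : ℝ) (p q : ℝ × Pth d) : ℝ :=
  SmP m p q + M * ‖p.2 zeroPt - q.2 zeroPt‖ ^ (2*m)

/-- `Ῡ^{m,M}(t,x,s,y) = Υ^{m,M}(t,x,s,y) + |s-t|²`. -/
def UpsBarP {d : ℕ} (m : ℕ) (M : ℝ) (p q : ℝ × Pth d) : ℝ :=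
  UpsP m M p q + (q.1 - p.1) ^ 2

/-- The single-path functional `Υ^{m,M}(x)`. -/
def Ups0 {d : ℕ} (m : ℕ) (M : ℝ) (x : Pth d) : ℝ :=
  (if normC x = 0 then 0
   else (normC x ^ (2*m) - ‖x zeroPt‖ ^ (2*m)) ^ 3 / normC x ^ (4*m))
  + M * ‖x zeroPt‖ ^ (2*m)

/-- `w̃^{t̂}` before taking the upper semicontinuous envelope:
the sup of `w(t,ξ)` over `ξ ∈ 𝒞₀` with `ξ(0) = x₀`. -/
def sliceSup {d : ℕ} (w : ℝ × Pth d → ℝ) (t : ℝ) (x0 : Eucl d) : ℝ :=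
  sSup {r : ℝ | ∃ ξ ∈ C0 d, ξ zeroPt = x0 ∧ r = w (t, ξ)}

def tildeW {d : ℕ} (w : ℝ × Pth d → ℝ) (tHat : ℝ) : ℝ × Eucl d → ℝ := fun p =>
  if tHat ≤ p.1 then sliceSup w p.1 p.2
  else sliceSup w tHat p.2 - Real.sqrt (tHat - p.1)

/-- Upper semicontinuous envelope. -/
def uscEnv {d : ℕ} (g : ℝ × Eucl d → ℝ) : ℝ × Eucl d → ℝ := fun p =>
  Filter.limsup g (nhds p)

/-- A local modulus of continuity. -/
structure LocalModulus (ρ : ℝ → ℝ → ℝ) : Prop where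
  cont : Continuous fun p : ℝ × ℝ => ρ p.1 p.2
  nonneg : ∀ t r, 0 ≤ t → 0 ≤ r → 0 ≤ ρ t r
  zero : ∀ r, 0 ≤ r → ρ 0 r = 0
  subadd : ∀ t s r, 0 ≤ t → 0 ≤ s → 0 ≤ r → ρ (t + s) r ≤ ρ t r + ρ s r
  mono : ∀ t r r', 0 ≤ t → 0 ≤ r → r ≤ r' → ρ t r ≤ ρ t r'

/-- Upper semicontinuity on a set w.r.t. `d_∞`. -/
def DUSCOn {d : ℕ} (w : ℝ × Pth d → ℝ) (S : Set (ℝ × Pth d)) : Prop :=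
  ∀ p ∈ S, ∀ ε > (0:ℝ), ∃ δ > (0:ℝ), ∀ q ∈ S, dInfty p q < δ → w q < w p + ε

def BddAboveOn {d : ℕ} (w : ℝ × Pth d → ℝ) (S : Set (ℝ × Pth d)) : Prop :=
  ∃ M : ℝ, ∀ p ∈ S, w p ≤ M

/-- `limsup_{t+|x|_C → ∞} w(t,x)/(t+|x|_C) < 0` on `Λ`. -/
def NegLimsupAtInfty {d : ℕ} (w : ℝ × Pth d → ℝ) : Prop :=
  ∃ c < (0:ℝ), ∃ R : ℝ, ∀ p ∈ Lam d 0, R ≤ p.1 + normC p.2 →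
    w p ≤ c * (p.1 + normC p.2)

/-- `φ ∈ C^{1,2}([0,∞) × ℝ^d)` with prescribed derivatives. -/
structure IsC12Fin (d : ℕ) (φ φt : ℝ × Eucl d → ℝ) (φx : ℝ × Eucl d → Eucl d)
    (φxx : ℝ × Eucl d → Matrix (Fin d) (Fin d) ℝ) : Prop where
  ht : ∀ p : ℝ × Eucl d, HasDerivAt (fun s => φ (s, p.2)) (φt p) p.1
  hx : ∀ p : ℝ × Eucl d, HasGradientAt (fun y => φ (p.1, y)) (φx p) p.2
  hxx : ∀ p : ℝ × Eucl d, ∀ i j,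
    HasDerivAt (fun h : ℝ => φx (p.1, p.2 + h • stdBasis d j) i) (φxx p i j) 0
  cont : Continuous φ
  cont_t : Continuous φt
  cont_x : Continuous φx
  cont_xx : ∀ i j, Continuous fun p => φxx p i j

/-- The class `Φ(t̂, x̂₀, T)` of Definition 6.1. -/
def PhiClass (d : ℕ) (tHat : ℝ) (xHat0 : Eucl d) (T : ℝ) (f : ℝ × Eucl d → ℝ) : Prop :=
  ∃ r > (0:ℝ), ∀ L > (0:ℝ),
    ∀ (φ φt : ℝ × Eucl d → ℝ) (φx : ℝ × Eucl d → Eucl d)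
      (φxx : ℝ × Eucl d → Matrix (Fin d) (Fin d) ℝ),
      IsC12Fin d φ φt φx φxx →
      ∀ t : ℝ, ∀ x0 : Eucl d, 0 < t → t < T →
        (∀ s : ℝ, ∀ y : Eucl d, 0 ≤ s → s ≤ T → f (s, y) - φ (s, y) ≤ f (t, x0) - φ (t, x0)) →
        ∃ C > (0:ℝ),
          (|t - tHat| + ‖x0 - xHat0‖ < r →
           |f (t, x0)| + ‖φx (t, x0)‖ + hsNorm (φxx (t, x0)) ≤ L →
           C ≤ φt (t, x0))

/-- Operator norm of a square matrix, via the associated Euclidean linear map. -/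
def matOpNorm {ι : Type*} [Fintype ι] [DecidableEq ι] (A : Matrix ι ι ℝ) : ℝ :=
  ‖LinearMap.toContinuousLinearMap (Matrix.toEuclideanLin A)‖

/-- The second-derivative matrix of `φ : ℝ^d × ℝ^d → ℝ` at a point, as a
`(2d) × (2d)` matrix indexed by `Fin d ⊕ Fin d`. -/
def hess2 {d : ℕ} (φ : Eucl d × Eucl d → ℝ) (z : Eucl d × Eucl d) :
    Matrix (Fin d ⊕ Fin d) (Fin d ⊕ Fin d) ℝ := fun k l =>
  iteratedFDeriv ℝ 2 φ z
    ![Sum.elim (fun i => ((stdBasis d i, 0) : Eucl d × Eucl d))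
        (fun j => ((0, stdBasis d j) : Eucl d × Eucl d)) k,
      Sum.elim (fun i => ((stdBasis d i, 0) : Eucl d × Eucl d))
        (fun j => ((0, stdBasis d j) : Eucl d × Eucl d)) l]

/-- Hessian matrix of `φ : ℝ^d → ℝ`. -/
def hess1 {d : ℕ} (φ : Eucl d → ℝ) (z : Eucl d) : Matrix (Fin d) (Fin d) ℝ := fun i j =>
  iteratedFDeriv ℝ 2 φ z ![stdBasis d i, stdBasis d j]


/-- The path `x - a_{t-t̂}` appearing in `S_m(t,x,t̂,a)` (for `t ≥ t̂`). -/
def zRel {d : ℕ} (tHat : ℝ) (a : Pth d) (p : ℝ × Pth d) : Pth d :=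
  shift p.2 (max (tHat - p.1) 0) - shift a (max (p.1 - tHat) 0)

/-!
`S_m(t,x,t̂,a)` depends on `(t,x)` only through `N = |x - a_{t-t̂}|_C` and `w = x(0) - a(0)`,
as `G(N,|w|)` with `G(N,r) = (N^{2m} - r^{2m})³ / N^{4m}`. Extending both paths flatly changes
neither `N` nor `w`, so the horizontal derivative vanishes. Both `N` and `w` are `1`-Lipschitz
for `d_∞`, and `G` and the gradient coefficient are continuous on the cone `|w| ≤ N`, also at
its vertex, where they are `O(N^{2m})` and `O(N^{2m-1})`. A vertical bump changes only `x(0)`,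
so `N = max(S, |w|)` with `S` the supremum over `θ < 0`; hence `S_m` is
`((S^{2m} - |w|^{2m})⁺)³ / S^{4m}`, which is `C¹` in `|w|²` because the positive part is cubed.
-/

open Set Bornology

instance : Nonempty PathDom := ⟨zeroPt⟩

section Paths

variable {d : ℕ}

lemma normC_nonneg (x : Pth d) : 0 ≤ normC x :=
  Real.iSup_nonneg fun _ => norm_nonneg _

lemma le_normC {x : Pth d} (hx : IsBounded (range x)) (θ : PathDom) : ‖x θ‖ ≤ normC x := by
  obtain ⟨C, hC⟩ := isBounded_iff_forall_norm_le.1 hx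
  exact le_ciSup ⟨C, forall_mem_range.2 fun θ => hC _ (mem_range_self θ)⟩ θ

lemma normC_le {x : Pth d} {M : ℝ} (h : ∀ θ, ‖x θ‖ ≤ M) : normC x ≤ M :=
  ciSup_le h

lemma isBounded_range_sub {x y : Pth d} (hx : IsBounded (range x)) (hy : IsBounded (range y)) :
    IsBounded (range (x - y)) :=
  (hx.sub hy).subset <| range_subset_iff.2 fun θ => sub_mem_sub (mem_range_self θ) (mem_range_self θ)

lemma abs_normC_sub_normC_le {x y : Pth d} (hx : IsBounded (range x))
    (hy : IsBounded (range y)) : |normC x - normC y| ≤ normC (x - y) := by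
  have hxy := isBounded_range_sub hx hy
  rw [abs_sub_le_iff, sub_le_iff_le_add, sub_le_iff_le_add]
  exact ⟨normC_le fun θ => (norm_le_insert' (x θ) (y θ)).trans
      (add_le_add (le_normC hy θ) (le_normC hxy θ)) |>.trans_eq (add_comm _ _),
    normC_le fun θ => (norm_le_insert (x θ) (y θ)).trans
      (add_le_add (le_normC hx θ) (le_normC hxy θ)) |>.trans_eq (add_comm _ _)⟩

lemma isBounded_range_of_mem_D0 {x : Pth d} (hx : x ∈ D0 d) : IsBounded (range x) := by
  obtain ⟨⟨hright, hleft⟩, hbot⟩ := hx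
  have hloc : ∀ θ, ∃ t ∈ 𝓝 θ, IsBounded (x '' t) := by
    intro θ
    obtain ⟨L, hL⟩ := hleft θ
    refine ⟨x ⁻¹' (Metric.ball (x θ) 1 ∪ Metric.ball L 1), ?_,
      (Metric.isBounded_ball.union Metric.isBounded_ball).subset (image_preimage_subset _ _)⟩
    rw [← nhdsGE_sup_nhdsLT, mem_sup]
    exact ⟨mem_of_superset (hright θ (Metric.ball_mem_nhds _ one_pos))
        (preimage_mono subset_union_left),
      mem_of_superset (hL (Metric.ball_mem_nhds _ one_pos)) (preimage_mono subset_union_right)⟩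
  obtain ⟨K, hK⟩ := mem_atBot_sets.1 (hbot (Metric.ball_mem_nhds 0 one_pos))
  have hcpt : IsCompact (Subtype.val ⁻¹' Icc K.1 0 : Set PathDom) :=
    isClosed_Iic.isClosedEmbedding_subtypeVal.isCompact_preimage isCompact_Icc
  refine ((isBounded_image_of_isLocallyBounded_of_isCompact hcpt hloc).union
    (Metric.isBounded_ball (x := (0 : Eucl d)) (r := 1))).subset ?_
  rintro _ ⟨θ, rfl⟩
  rcases le_total θ K with h | h
  · exact Or.inr (hK θ h)
  · exact Or.inl ⟨θ, ⟨h, θ.2⟩, rfl⟩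

lemma shift_zero (x : Pth d) : shift x 0 = x := by
  funext θ
  unfold shift
  split_ifs with h
  · rw [show θ = zeroPt from Subtype.ext (show θ.1 = 0 by linarith [θ.2.out])]
  · simp only [add_zero]

lemma shift_apply_zeroPt (x : Pth d) {h : ℝ} (hh : 0 ≤ h) : shift x h zeroPt = x zeroPt :=
  dif_pos (by simpa [zeroPt] using hh)

lemma shift_shift (x : Pth d) {s : ℝ} (hs : 0 ≤ s) (h : ℝ) :
    shift (shift x s) h = shift x (s + h) := by
  funext θ
  have hθ : θ.1 ≤ 0 := θ.2
  have hz : (zeroPt : PathDom).1 = 0 := rfl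
  unfold shift
  split_ifs <;> simp only [hz] at * <;>
    first | rfl | linarith | simp only [add_assoc, add_comm h s]

lemma shift_sub (x y : Pth d) (h : ℝ) : shift (x - y) h = shift x h - shift y h := by
  funext θ
  simp only [Pi.sub_apply, shift]
  split_ifs <;> rfl

lemma range_shift (x : Pth d) {h : ℝ} (hh : 0 ≤ h) : range (shift x h) = range x := by
  refine Subset.antisymm (range_subset_iff.2 fun θ => ?_) (range_subset_iff.2 fun θ => ?_)
  · unfold shift
    split_ifs <;> exact mem_range_self _
  · have hθ : θ.1 ≤ 0 := θ.2
    refine ⟨⟨θ.1 - h, by simp only [mem_Iic]; linarith⟩, ?_⟩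
    unfold shift
    split_ifs with h1
    · have h1' : -h ≤ θ.1 - h := h1
      rw [show θ = zeroPt from Subtype.ext (show θ.1 = 0 by linarith)]
    · simp only [sub_add_cancel]

lemma normC_shift (x : Pth d) {h : ℝ} (hh : 0 ≤ h) : normC (shift x h) = normC x := by
  unfold normC iSup
  rw [← Function.comp_def norm, range_comp, range_shift x hh, ← range_comp]
  rfl

lemma vpert_apply_zeroPt (x : Pth d) (v : Eucl d) : vpert x v zeroPt = x zeroPt + v :=
  if_pos rfl

lemma vpert_apply_of_ne (x : Pth d) (v : Eucl d) {θ : PathDom} (h : θ.1 ≠ 0) :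
    vpert x v θ = x θ :=
  if_neg h

lemma vpert_zero (x : Pth d) : vpert x 0 = x := by
  funext θ
  unfold vpert
  split_ifs <;> simp

lemma vpert_sub (x y : Pth d) (v : Eucl d) : vpert x v - y = vpert (x - y) v := by
  funext θ
  simp only [Pi.sub_apply, vpert]
  split_ifs <;> simp only [add_sub_right_comm]

lemma isBounded_range_vpert {x : Pth d} (hx : IsBounded (range x)) (v : Eucl d) :
    IsBounded (range (vpert x v)) := by
  refine (hx.insert (x zeroPt + v)).subset (range_subset_iff.2 fun θ => ?_)
  by_cases h : θ.1 = 0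
  · rw [show θ = zeroPt from Subtype.ext h, vpert_apply_zeroPt]
    exact mem_insert _ _
  · rw [vpert_apply_of_ne _ _ h]
    exact mem_insert_of_mem _ (mem_range_self θ)

/-- The sup norm of a vertical bump splits into the supremum over `θ < 0`, computed here as
the sup norm of the path with its value at `0` set to zero, and the new value at `0`. -/
lemma normC_vpert {x : Pth d} (hx : IsBounded (range x)) (v : Eucl d) :
    normC (vpert x v) = max (normC (vpert x (-x zeroPt))) ‖x zeroPt + v‖ := by
  have hoff : ∀ u : Eucl d, ∀ θ : PathDom, θ.1 ≠ 0 → vpert x u θ = vpert x (-x zeroPt) θ :=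
    fun u θ h => by rw [vpert_apply_of_ne _ _ h, vpert_apply_of_ne _ _ h]
  apply le_antisymm
  · refine normC_le fun θ => ?_
    by_cases h : θ.1 = 0
    · rw [show θ = zeroPt from Subtype.ext h, vpert_apply_zeroPt]
      exact le_max_right _ _
    · rw [hoff v θ h]
      exact (le_normC (isBounded_range_vpert hx _) θ).trans (le_max_left _ _)
  · refine max_le (normC_le fun θ => ?_) ?_
    · by_cases h : θ.1 = 0
      · rw [show θ = zeroPt from Subtype.ext h, vpert_apply_zeroPt, add_neg_cancel, norm_zero]
        exact normC_nonneg _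
      · rw [← hoff v θ h]
        exact le_normC (isBounded_range_vpert hx _) θ
    · rw [← vpert_apply_zeroPt x v]
      exact le_normC (isBounded_range_vpert hx _) zeroPt

variable {tHat : ℝ} {a : Pth d} {p q : ℝ × Pth d}

lemma zRel_of_le (hp : tHat ≤ p.1) : zRel tHat a p = p.2 - shift a (p.1 - tHat) := by
  rw [zRel, max_eq_right (sub_nonpos.2 hp), max_eq_left (sub_nonneg.2 hp), shift_zero]

lemma zRel_apply_zeroPt : zRel tHat a p zeroPt = p.2 zeroPt - a zeroPt := by
  rw [zRel, Pi.sub_apply, shift_apply_zeroPt _ (le_max_right _ _),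
    shift_apply_zeroPt _ (le_max_right _ _)]

lemma isBounded_range_zRel (ha : IsBounded (range a)) (hp : IsBounded (range p.2)) :
    IsBounded (range (zRel tHat a p)) := by
  rw [zRel]
  exact isBounded_range_sub (by rwa [range_shift _ (le_max_right _ _)])
    (by rwa [range_shift _ (le_max_right _ _)])

lemma shift_zRel_sub_zRel (hp : tHat ≤ p.1) (hpq : p.1 ≤ q.1) :
    shift (zRel tHat a p) (q.1 - p.1) - zRel tHat a q = shift p.2 (q.1 - p.1) - q.2 := by
  rw [zRel_of_le hp, zRel_of_le (hp.trans hpq), shift_sub, shift_shift _ (sub_nonneg.2 hp),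
    show p.1 - tHat + (q.1 - p.1) = q.1 - tHat by ring]
  abel

lemma zRel_flat (hp : tHat ≤ p.1) {h : ℝ} (hh : 0 ≤ h) :
    zRel tHat a (p.1 + h, shift p.2 h) = shift (zRel tHat a p) h := by
  have := shift_zRel_sub_zRel (a := a) (q := (p.1 + h, shift p.2 h)) hp (by simpa using hh)
  rw [add_sub_cancel_left, sub_self, sub_eq_zero] at this
  exact this.symm

lemma zRel_vpert (hp : tHat ≤ p.1) (v : Eucl d) :
    zRel tHat a (p.1, vpert p.2 v) = vpert (zRel tHat a p) v := by
  rw [zRel_of_le hp, zRel_of_le (p := (p.1, vpert p.2 v)) hp, vpert_sub]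

def smCoords (tHat : ℝ) (a : Pth d) (p : ℝ × Pth d) : ℝ × Eucl d :=
  (normC (zRel tHat a p), p.2 zeroPt - a zeroPt)

lemma norm_smCoords_snd_le (ha : IsBounded (range a)) (hp : IsBounded (range p.2)) :
    ‖(smCoords tHat a p).2‖ ≤ (smCoords tHat a p).1 := by
  rw [smCoords, ← zRel_apply_zeroPt]
  exact le_normC (isBounded_range_zRel ha hp) zeroPt

lemma dist_smCoords_le_of_le (ha : IsBounded (range a)) (hp : IsBounded (range p.2))
    (hq : IsBounded (range q.2)) (htp : tHat ≤ p.1) (hpq : p.1 ≤ q.1) :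
    dist (smCoords tHat a q) (smCoords tHat a p)
      ≤ |q.1 - p.1| + normC (shift p.2 (q.1 - p.1) - q.2) := by
  have hδ : 0 ≤ q.1 - p.1 := sub_nonneg.2 hpq
  have hpδ : IsBounded (range (shift p.2 (q.1 - p.1))) := by rwa [range_shift _ hδ]
  have hzδ : IsBounded (range (shift (zRel tHat a p) (q.1 - p.1))) := by
    rw [range_shift _ hδ]
    exact isBounded_range_zRel ha hp
  refine le_add_of_nonneg_of_le (abs_nonneg _) ?_
  rw [Prod.dist_eq, Real.dist_eq, dist_eq_norm]
  refine max_le ?_ ?_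
  · simp only [smCoords]
    rw [← normC_shift (zRel tHat a p) hδ, abs_sub_comm, ← shift_zRel_sub_zRel htp hpq]
    exact abs_normC_sub_normC_le hzδ (isBounded_range_zRel ha hq)
  · simp only [smCoords, sub_sub_sub_cancel_right]
    rw [norm_sub_rev]
    have := le_normC (isBounded_range_sub hpδ hq) zeroPt
    rwa [Pi.sub_apply, shift_apply_zeroPt _ hδ] at this

lemma dist_smCoords_le (ha : IsBounded (range a)) (hp : p ∈ LamHat d tHat)
    (hq : q ∈ LamHat d tHat) : dist (smCoords tHat a q) (smCoords tHat a p) ≤ dInfty p q := by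
  have hbp := isBounded_range_of_mem_D0 hp.2
  have hbq := isBounded_range_of_mem_D0 hq.2
  unfold dInfty
  split_ifs with hpq
  · exact dist_smCoords_le_of_le ha hbp hbq hp.1 hpq
  · rw [dist_comm]
    exact dist_smCoords_le_of_le ha hbq hbp hq.1 (le_of_not_ge hpq)

lemma dContinuousOn_comp {X E : Type*} [PseudoMetricSpace X] [NormedAddCommGroup E]
    {F : X → E} {C : Set X} {Ψ : ℝ × Pth d → X} {S : Set (ℝ × Pth d)}
    (hF : ContinuousOn F C) (hΨ : MapsTo Ψ S C)
    (hdist : ∀ p ∈ S, ∀ q ∈ S, dist (Ψ q) (Ψ p) ≤ dInfty p q) :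
    DContinuousOn (fun p => F (Ψ p)) S := by
  intro p hp ε hε
  obtain ⟨δ, hδ, hF'⟩ := Metric.continuousWithinAt_iff.1 (hF _ (hΨ hp)) ε hε
  exact ⟨δ, hδ, fun q hq hpq => by
    simpa only [dist_eq_norm] using hF' (hΨ hq) ((hdist p hp q hq).trans_lt hpq)⟩

lemma hasHorizDerivAt_zero_of_flat {f : ℝ × Pth d → ℝ}
    (hf : ∀ h > 0, f (p.1 + h, shift p.2 h) = f p) : HasHorizDerivAt f p 0 :=
  tendsto_const_nhds.congr' <| eventually_nhdsWithin_of_forall fun h hh => by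
    simp only [hf h hh, sub_self, zero_div]

lemma HasDerivAt.hasVertDerivAt {f : ℝ × Pth d → ℝ} {i : Fin d} {c : ℝ}
    (hf : HasDerivAt (fun s : ℝ => f (p.1, vpert p.2 (s • stdBasis d i))) c 0) :
    HasVertDerivAt f p i c := by
  refine (hasDerivAt_iff_tendsto_slope.1 hf).congr fun s => ?_
  rw [slope_def_field, zero_smul, vpert_zero, sub_zero]

end Paths

section Profile

variable (m : ℕ)

def smProfile (N r : ℝ) : ℝ :=
  if N = 0 then 0 else (N ^ (2 * m) - r ^ (2 * m)) ^ 3 / N ^ (4 * m)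

def smGradCoeff (N r : ℝ) : ℝ :=
  if N = 0 then 0
  else -(6 * m : ℝ) * (N ^ (2 * m) - r ^ (2 * m)) ^ 2 * r ^ (2 * m - 2) / N ^ (4 * m)

/-- `smProfile m (max S r) r` as a function of `s = r²`, see `smProfile_max`. -/
def smCutProfile (S s : ℝ) : ℝ :=
  max (S ^ (2 * m) - s ^ m) 0 ^ 3 / S ^ (4 * m)

variable {m}

lemma abs_smProfile_le {N r : ℝ} (hr : 0 ≤ r) (hrN : r ≤ N) : |smProfile m N r| ≤ N ^ (2 * m) := by
  unfold smProfile
  split_ifs with hN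
  · simp only [abs_zero]
    positivity
  have hNpos : 0 < N := lt_of_le_of_ne (hr.trans hrN) (Ne.symm hN)
  have hA : 0 ≤ N ^ (2 * m) - r ^ (2 * m) := sub_nonneg.2 (pow_le_pow_left₀ hr hrN _)
  rw [abs_of_nonneg (by positivity), div_le_iff₀ (by positivity)]
  calc (N ^ (2 * m) - r ^ (2 * m)) ^ 3 ≤ (N ^ (2 * m)) ^ 3 :=
        pow_le_pow_left₀ hA (sub_le_self _ (by positivity)) 3
    _ = N ^ (2 * m) * N ^ (4 * m) := by ring

lemma abs_smGradCoeff_mul_le (hm : 1 ≤ m) {N r : ℝ} (hr : 0 ≤ r) (hrN : r ≤ N) :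
    |smGradCoeff m N r| * r ≤ 6 * m * N ^ (2 * m - 1) := by
  unfold smGradCoeff
  split_ifs with hN
  · simp only [abs_zero, zero_mul]
    positivity
  have hNpos : 0 < N := lt_of_le_of_ne (hr.trans hrN) (Ne.symm hN)
  set A := N ^ (2 * m) - r ^ (2 * m)
  have hA : 0 ≤ A := sub_nonneg.2 (pow_le_pow_left₀ hr hrN _)
  have hA2 : A ^ 2 ≤ N ^ (4 * m) :=
    calc A ^ 2 ≤ (N ^ (2 * m)) ^ 2 := pow_le_pow_left₀ hA (sub_le_self _ (by positivity)) 2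
      _ = N ^ (4 * m) := by ring
  have hr2 : r ^ (2 * m - 2) * r ≤ N ^ (2 * m - 1) := by
    rw [← pow_succ, show 2 * m - 2 + 1 = 2 * m - 1 by omega]
    exact pow_le_pow_left₀ hr hrN _
  rw [neg_mul, neg_mul, neg_div, abs_neg, abs_of_nonneg (by positivity), div_mul_eq_mul_div,
    div_le_iff₀ (by positivity)]
  calc 6 * m * A ^ 2 * r ^ (2 * m - 2) * r = 6 * m * (A ^ 2 * (r ^ (2 * m - 2) * r)) := by ring
    _ ≤ 6 * m * (N ^ (4 * m) * N ^ (2 * m - 1)) := by gcongr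
    _ = 6 * m * N ^ (2 * m - 1) * N ^ (4 * m) := by ring

lemma continuousOn_cone_of_norm_le {E F : Type*} [SeminormedAddCommGroup E]
    [NormedAddCommGroup F] {f : ℝ × E → F} {C : ℝ} {k : ℕ} (hk : k ≠ 0)
    (hbound : ∀ x : ℝ × E, ‖x.2‖ ≤ x.1 → ‖f x‖ ≤ C * x.1 ^ k)
    (hcont : ∀ x : ℝ × E, x.1 ≠ 0 → ContinuousAt f x) :
    ContinuousOn f {x | ‖x.2‖ ≤ x.1} := by
  intro x hx
  by_cases h0 : x.1 = 0
  · have hfx : f x = 0 := norm_le_zero_iff.1 (by simpa [h0, hk] using hbound x hx : ‖f x‖ ≤ 0)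
    rw [ContinuousWithinAt, hfx]
    refine squeeze_zero_norm' (eventually_nhdsWithin_of_forall hbound) ?_
    have : Tendsto (fun y : ℝ × E => C * y.1 ^ k) (𝓝 x) (𝓝 (C * x.1 ^ k)) :=
      (continuous_const.mul (continuous_fst.pow k)).tendsto x
    simpa [h0, hk] using this.mono_left nhdsWithin_le_nhds
  · exact (hcont x h0).continuousWithinAt

lemma continuousOn_smProfile (hm : 1 ≤ m) {E : Type*} [SeminormedAddCommGroup E] :
    ContinuousOn (fun x : ℝ × E => smProfile m x.1 ‖x.2‖) {x | ‖x.2‖ ≤ x.1} := by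
  refine continuousOn_cone_of_norm_le (C := 1) (k := 2 * m) (by omega)
    (fun x hx => by simpa using abs_smProfile_le (norm_nonneg _) hx) fun x hx => ?_
  have hcont : ContinuousAt (fun y : ℝ × E =>
      (y.1 ^ (2 * m) - ‖y.2‖ ^ (2 * m)) ^ 3 / y.1 ^ (4 * m)) x :=
    by fun_prop (disch := exact pow_ne_zero _ hx)
  refine hcont.congr_of_eventuallyEq ?_
  filter_upwards [continuous_fst.continuousAt.eventually_ne hx] with y hy
  simp only [smProfile, if_neg hy]

lemma continuousOn_smGradCoeff_smul (hm : 1 ≤ m) {E : Type*} [NormedAddCommGroup E]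
    [NormedSpace ℝ E] :
    ContinuousOn (fun x : ℝ × E => smGradCoeff m x.1 ‖x.2‖ • x.2) {x | ‖x.2‖ ≤ x.1} := by
  refine continuousOn_cone_of_norm_le (C := 6 * m) (k := 2 * m - 1) (by omega)
    (fun x hx => by
      simpa [norm_smul] using abs_smGradCoeff_mul_le hm (norm_nonneg _) hx) fun x hx => ?_
  have hcont : ContinuousAt (fun y : ℝ × E =>
      (-(6 * m : ℝ) * (y.1 ^ (2 * m) - ‖y.2‖ ^ (2 * m)) ^ 2 * ‖y.2‖ ^ (2 * m - 2)
        / y.1 ^ (4 * m)) • y.2) x :=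
    by fun_prop (disch := exact pow_ne_zero _ hx)
  refine hcont.congr_of_eventuallyEq ?_
  filter_upwards [continuous_fst.continuousAt.eventually_ne hx] with y hy
  simp only [smGradCoeff, if_neg hy]

lemma smProfile_max {S r : ℝ} (hS : 0 ≤ S) (hr : 0 ≤ r) :
    smProfile m (max S r) r = smCutProfile m S (r ^ 2) := by
  rw [smCutProfile, ← pow_mul]
  rcases le_total r S with hrS | hSr
  · rw [max_eq_left hrS, max_eq_left (sub_nonneg.2 (pow_le_pow_left₀ hr hrS _)), smProfile]
    split_ifs with hS0
    · simp [hS0, le_antisymm (hrS.trans_eq hS0) hr]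
    · rfl
  · rw [max_eq_right hSr, max_eq_right (sub_nonpos.2 (pow_le_pow_left₀ hS hSr _)), smProfile]
    simp

lemma hasDerivAt_max_zero_pow {n : ℕ} (hn : 2 ≤ n) (u : ℝ) :
    HasDerivAt (fun v : ℝ => max v 0 ^ n) (n * max u 0 ^ (n - 1)) u := by
  rcases lt_trichotomy u 0 with hu | rfl | hu
  · have hzero : (fun v : ℝ => max v 0 ^ n) =ᶠ[𝓝 u] fun _ => 0 := by
      filter_upwards [eventually_lt_nhds hu] with v hv
      simp [max_eq_right hv.le, show n ≠ 0 by omega]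
    simpa [max_eq_right hu.le, show n - 1 ≠ 0 by omega] using
      (hasDerivAt_const u (0 : ℝ)).congr_of_eventuallyEq hzero
  · have hright : HasDerivWithinAt (fun v : ℝ => max v 0 ^ n) 0 (Ici 0) 0 := by
      refine ((hasDerivAt_pow n (0 : ℝ)).hasDerivWithinAt.congr (fun v hv => ?_) (by simp)).congr_deriv
        (by simp [show n - 1 ≠ 0 by omega])
      rw [max_eq_left hv]
    have hleft : HasDerivWithinAt (fun v : ℝ => max v 0 ^ n) 0 (Iic 0) 0 :=
      (hasDerivWithinAt_const _ _ (0 : ℝ)).congr (fun v hv => by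
        simp [max_eq_right (mem_Iic.1 hv), show n ≠ 0 by omega]) (by simp [show n ≠ 0 by omega])
    simpa [show n - 1 ≠ 0 by omega, Ici_union_Iic] using hright.union hleft
  · have hpow : (fun v : ℝ => max v 0 ^ n) =ᶠ[𝓝 u] fun v => v ^ n := by
      filter_upwards [eventually_gt_nhds hu] with v hv
      rw [max_eq_left hv.le]
    simpa [max_eq_left hu.le] using (hasDerivAt_pow n u).congr_of_eventuallyEq hpow

lemma hasDerivAt_smCutProfile {S r : ℝ} (hS : 0 ≤ S) (hr : 0 ≤ r) :
    HasDerivAt (smCutProfile m S) (smGradCoeff m (max S r) r / 2) (r ^ 2) := by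
  have hinner : HasDerivAt (fun s : ℝ => S ^ (2 * m) - s ^ m) (-(m * (r ^ 2) ^ (m - 1))) (r ^ 2) :=
    (hasDerivAt_pow m _).const_sub _
  refine (((hasDerivAt_max_zero_pow (n := 3) (by norm_num) _).comp _ hinner).div_const
    (S ^ (4 * m))).congr_deriv ?_
  simp only [← pow_mul]
  rw [show 2 * (m - 1) = 2 * m - 2 by omega, smGradCoeff]
  rcases le_total r S with hrS | hSr
  · rw [max_eq_left hrS, max_eq_left (sub_nonneg.2 (pow_le_pow_left₀ hr hrS _))]
    split_ifs with hS0
    · obtain rfl : r = 0 := le_antisymm (hrS.trans_eq hS0) hr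
      rcases Nat.eq_zero_or_pos m with rfl | hm
      · simp
      · simp [hS0, hm.ne']
    · push_cast
      ring
  · rw [max_eq_right hSr, max_eq_right (sub_nonpos.2 (pow_le_pow_left₀ hS hSr _))]
    split_ifs <;> simp

end Profile

section Sm

variable {d : ℕ} {m : ℕ} {tHat : ℝ} {a : Pth d} {p : ℝ × Pth d}

lemma SmP_eq_smProfile :
    SmP m p (tHat, a) = smProfile m (normC (zRel tHat a p)) ‖p.2 zeroPt - a zeroPt‖ :=
  rfl

lemma SmP_flat (hp : tHat ≤ p.1) {h : ℝ} (hh : 0 ≤ h) :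
    SmP m (p.1 + h, shift p.2 h) (tHat, a) = SmP m p (tHat, a) := by
  rw [SmP_eq_smProfile, SmP_eq_smProfile, zRel_flat hp hh, normC_shift _ hh]
  dsimp only
  rw [shift_apply_zeroPt _ hh]

lemma hasVertDerivAt_SmP (ha : IsBounded (range a)) (hp : p ∈ LamHat d tHat) (i : Fin d) :
    HasVertDerivAt (fun p' => SmP m p' (tHat, a)) p i
      (smGradCoeff m (normC (zRel tHat a p)) ‖p.2 zeroPt - a zeroPt‖
        * (p.2 zeroPt - a zeroPt) i) := by
  refine HasDerivAt.hasVertDerivAt ?_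
  set z := zRel tHat a p
  set w := p.2 zeroPt - a zeroPt with hw
  set e := stdBasis d i
  set S := normC (vpert z (-w))
  have hz : IsBounded (range z) := isBounded_range_zRel ha (isBounded_range_of_mem_D0 hp.2)
  have hzw : z zeroPt = w := zRel_apply_zeroPt
  have hnorm : ∀ v, normC (vpert z v) = max S ‖w + v‖ := fun v => by
    rw [normC_vpert hz, hzw]
  have hN : normC z = max S ‖w‖ := by simpa [vpert_zero] using hnorm 0
  have hS : (fun s : ℝ => SmP m (p.1, vpert p.2 (s • e)) (tHat, a))
      = smCutProfile m S ∘ fun s => ‖w + s • e‖ ^ 2 := by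
    funext s
    rw [Function.comp_apply, SmP_eq_smProfile, zRel_vpert hp.1, hnorm]
    dsimp only
    rw [vpert_apply_zeroPt, show p.2 zeroPt + s • e - a zeroPt = w + s • e by rw [hw]; abel,
      smProfile_max (normC_nonneg _) (norm_nonneg _)]
  have hsq : HasDerivAt (fun s : ℝ => ‖w + s • e‖ ^ 2) (2 * w i) 0 := by
    simpa [e, stdBasis, EuclideanSpace.inner_single_right] using
      (((hasDerivAt_id (0 : ℝ)).smul_const e).const_add w).norm_sq
  rw [hS, hN]
  refine ((hasDerivAt_smCutProfile (normC_nonneg _) (norm_nonneg w)).comp_of_eq 0 hsq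
    (by simp)).congr_deriv ?_
  ring

end Sm

/-- first-order part of Lemma 3.1: continuity, vanishing
horizontal derivative, and the explicit first vertical derivative of
`S_m^{t̂,a}(t,x) = S_m(t,x,t̂,a)` on `Λ̂^{t̂}`. -/
theorem Sm_first_order_derivatives {d : ℕ} (m : ℕ) (hm : 1 ≤ m)
    (tHat : ℝ) (a : Pth d) (ha : (tHat, a) ∈ LamHat d 0) :
    DContinuousOn (fun p => SmP m p (tHat, a)) (LamHat d tHat) ∧
    (∀ p ∈ LamHat d tHat, HasHorizDerivAt (fun p' => SmP m p' (tHat, a)) p 0) ∧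
    (∀ p ∈ LamHat d tHat, ∀ i : Fin d,
      HasVertDerivAt (fun p' => SmP m p' (tHat, a)) p i
        ((if normC (zRel tHat a p) = 0 then (0:ℝ)
          else -(6 * m : ℝ)
            * (normC (zRel tHat a p) ^ (2 * m) - ‖p.2 zeroPt - a zeroPt‖ ^ (2 * m)) ^ 2
            * ‖p.2 zeroPt - a zeroPt‖ ^ (2 * m - 2)
            / normC (zRel tHat a p) ^ (4 * m))
          * ((p.2 zeroPt - a zeroPt) i))) ∧
    DContinuousOn (fun p =>
        ((if normC (zRel tHat a p) = 0 then (0:ℝ)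
          else -(6 * m : ℝ)
            * (normC (zRel tHat a p) ^ (2 * m) - ‖p.2 zeroPt - a zeroPt‖ ^ (2 * m)) ^ 2
            * ‖p.2 zeroPt - a zeroPt‖ ^ (2 * m - 2)
            / normC (zRel tHat a p) ^ (4 * m))
          • (p.2 zeroPt - a zeroPt) : Eucl d))
      (LamHat d tHat) := by
  have hba : IsBounded (range a) := isBounded_range_of_mem_D0 ha.2
  have hcone : MapsTo (smCoords tHat a) (LamHat d tHat) {x | ‖x.2‖ ≤ x.1} := fun p hp =>
    norm_smCoords_snd_le hba (isBounded_range_of_mem_D0 hp.2)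
  have hdist : ∀ p ∈ LamHat d tHat, ∀ q ∈ LamHat d tHat,
      dist (smCoords tHat a q) (smCoords tHat a p) ≤ dInfty p q :=
    fun p hp q hq => dist_smCoords_le hba hp hq
  exact ⟨dContinuousOn_comp (continuousOn_smProfile hm) hcone hdist,
    fun p hp => hasHorizDerivAt_zero_of_flat fun h hh => SmP_flat hp.1 hh.le,
    fun p hp i => hasVertDerivAt_SmP hba hp i,
    dContinuousOn_comp (Ψ := smCoords tHat a) (continuousOn_smGradCoeff_smul hm) hcone hdist⟩

end PathHJB
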